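/- arXiv:0804.2956 — 4 statements merged into one kernel-verified Lean document; each statement's English description precedes it below -/
import Mathlib

section
/- If the automorphism group of the simple graph G acts transitively on the edge set of G (i.e., for any two edges e, f of G there exists a graph automorphism φ of G with φ(e) = f), then all projected edge vectors have the same norm: ‖P χ_(a,b)‖ = ‖P χ_(c,d)‖ for every two pairs (a,b) and (c,d) of adjacent vertices of G. -/
open scoped BigOperators RealInnerProductSpace

noncomputable section

variable {V : Type*} [Fintype V] [DecidableEq V]

/-- The indicator chain `χ_(a,b)`: 1 at `(a,b)`, −1 at `(b,a)`, 0 elsewhere. -/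
def edgeChi (a b : V) : EuclideanSpace ℝ (V × V) :=
  WithLp.toLp 2 fun p => if p = (a, b) then 1 else if p = (b, a) then -1 else 0

/-- The cycle space `H` of a simple graph `G`: the kernel of the boundary map
restricted to the edge space `C₁`. -/
def cycleSpace (G : SimpleGraph V) : Submodule ℝ (EuclideanSpace ℝ (V × V)) where
  carrier := { f | (∀ u v : V, f (u, v) = - f (v, u)) ∧
               (∀ u v : V, ¬ G.Adj u v → f (u, v) = 0) ∧
               (∀ v : V, ∑ u : V, f (u, v) = 0) }
  add_mem' := by
    rintro f g ⟨hf1, hf2, hf3⟩ ⟨hg1, hg2, hg3⟩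
    refine ⟨fun u v => ?_, fun u v h => ?_, fun v => ?_⟩
    · show f (u, v) + g (u, v) = -(f (v, u) + g (v, u))
      rw [hf1 u v, hg1 u v]; ring
    · show f (u, v) + g (u, v) = 0
      rw [hf2 u v h, hg2 u v h]; ring
    · show ∑ u : V, (f (u, v) + g (u, v)) = 0
      rw [Finset.sum_add_distrib, hf3 v, hg3 v]; ring
  zero_mem' := by
    refine ⟨fun u v => ?_, fun u v h => ?_, fun v => ?_⟩ <;> simp
  smul_mem' := by
    rintro c f ⟨hf1, hf2, hf3⟩
    refine ⟨fun u v => ?_, fun u v h => ?_, fun v => ?_⟩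
    · show c * f (u, v) = -(c * f (v, u))
      rw [hf1 u v]; ring
    · show c * f (u, v) = 0
      rw [hf2 u v h]; ring
    · show ∑ u : V, c * f (u, v) = 0
      rw [← Finset.mul_sum, hf3 v]; ring

/-- The projected edge vector `P χ_(a,b)`, where `P` is the orthogonal projection
onto the cycle space of `G`. -/
def projEdge (G : SimpleGraph V) (a b : V) : EuclideanSpace ℝ (V × V) :=
  (Submodule.orthogonalProjection (cycleSpace G) (edgeChi a b) : EuclideanSpace ℝ (V × V))

/-! An automorphism `φ` of `G` permutes `V × V`, hence acts on the edge space as an isometry that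
preserves the cycle space `H`. Such an isometry commutes with the orthogonal projection onto `H`,
so it carries `P χ_(a,b)` to `P χ_(φ a, φ b)` without changing its norm. Edge-transitivity only
matches unordered edges, and reversing an edge merely negates `χ`. -/

theorem Submodule.starProjection_apply_of_map_eq {𝕜 E : Type*} [RCLike 𝕜] [NormedAddCommGroup E]
    [InnerProductSpace 𝕜 E] (K : Submodule 𝕜 E) [K.HasOrthogonalProjection] (f : E ≃ₗᵢ[𝕜] E)
    (hK : K.map (f.toLinearEquiv : E →ₗ[𝕜] E) = K) (x : E) :
    K.starProjection (f x) = f (K.starProjection x) := by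
  simpa only [LinearIsometryEquiv.symm_apply_apply, hK] using
    Submodule.starProjection_map_apply f K (f x)

def vertexPermIso (σ : V ≃ V) : EuclideanSpace ℝ (V × V) ≃ₗᵢ[ℝ] EuclideanSpace ℝ (V × V) :=
  LinearIsometryEquiv.piLpCongrLeft 2 ℝ ℝ (σ.prodCongr σ)

omit [DecidableEq V] in
theorem vertexPermIso_apply (σ : V ≃ V) (f : EuclideanSpace ℝ (V × V)) (p : V × V) :
    vertexPermIso σ f p = f (σ.symm p.1, σ.symm p.2) := rfl

theorem vertexPermIso_edgeChi (σ : V ≃ V) (a b : V) :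
    vertexPermIso σ (edgeChi a b) = edgeChi (σ a) (σ b) := by
  ext p
  simp [vertexPermIso_apply, edgeChi, Prod.ext_iff, Equiv.symm_apply_eq]

omit [DecidableEq V] in
theorem vertexPermIso_mem_cycleSpace {G : SimpleGraph V} (φ : G ≃g G)
    {f : EuclideanSpace ℝ (V × V)} (hf : f ∈ cycleSpace G) :
    vertexPermIso φ.toEquiv f ∈ cycleSpace G := by
  obtain ⟨h_antisymm, h_support, h_boundary⟩ := hf
  refine ⟨fun u v => h_antisymm _ _, fun u v huv => h_support _ _ ?_, fun v => ?_⟩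
  · exact fun hadj => huv (φ.symm.map_adj_iff.mp hadj)
  · simp only [vertexPermIso_apply]
    rw [Equiv.sum_comp φ.toEquiv.symm (fun u => f (u, φ.toEquiv.symm v))]
    exact h_boundary _

omit [DecidableEq V] in
theorem cycleSpace_map_vertexPermIso {G : SimpleGraph V} (φ : G ≃g G) :
    (cycleSpace G).map ((vertexPermIso φ.toEquiv).toLinearEquiv : _ →ₗ[ℝ] _) = cycleSpace G := by
  refine le_antisymm ?_ fun f hf => ⟨vertexPermIso φ.toEquiv.symm f, ?_, ?_⟩
  · rintro _ ⟨f, hf, rfl⟩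
    exact vertexPermIso_mem_cycleSpace φ hf
  · exact vertexPermIso_mem_cycleSpace φ.symm hf
  · ext p
    exact congrArg f (Prod.ext (φ.toEquiv.apply_symm_apply p.1) (φ.toEquiv.apply_symm_apply p.2))

theorem projEdge_map (G : SimpleGraph V) (φ : G ≃g G) (a b : V) :
    projEdge G (φ a) (φ b) = vertexPermIso φ.toEquiv (projEdge G a b) := by
  have h := (cycleSpace G).starProjection_apply_of_map_eq _ (cycleSpace_map_vertexPermIso φ)
    (edgeChi a b)
  rw [vertexPermIso_edgeChi] at h
  exact h

omit [Fintype V] in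
theorem edgeChi_swap {a b : V} (hab : a ≠ b) : edgeChi b a = -edgeChi a b := by
  ext q
  simp only [edgeChi, PiLp.neg_apply, PiLp.toLp_apply]
  split_ifs <;> simp_all [Prod.ext_iff]

theorem projEdge_swap (G : SimpleGraph V) {a b : V} (hab : a ≠ b) :
    projEdge G b a = -projEdge G a b := by
  simp only [projEdge, edgeChi_swap hab, map_neg, Submodule.coe_neg]

/-- **Theorem 1.3 (Kurihara).** If the automorphism group of a simple graph `G` acts
transitively on the edge set of `G`, then all projected edge vectors `P χ_(a,b)`
have the same norm. -/
theorem edge_transitive_proj_norm_eq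
    {V : Type*} [Fintype V] [DecidableEq V] (G : SimpleGraph V)
    (hET : ∀ e ∈ G.edgeSet, ∀ f ∈ G.edgeSet, ∃ φ : G ≃g G, Sym2.map (⇑φ) e = f) :
    ∀ a b c d : V, G.Adj a b → G.Adj c d →
      ‖projEdge G a b‖ = ‖projEdge G c d‖ := by
  intro a b c d hab hcd
  obtain ⟨φ, hφ⟩ := hET s(a, b) hab s(c, d) hcd
  rw [Sym2.map_mk, Sym2.eq_iff] at hφ
  rcases hφ with ⟨rfl, rfl⟩ | ⟨rfl, rfl⟩
  · rw [projEdge_map, LinearIsometryEquiv.norm_map]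
  · rw [projEdge_swap G hcd.ne.symm, norm_neg, projEdge_map, LinearIsometryEquiv.norm_map]

end
end

section
/- Let G be a connected simple graph on a finite vertex set. If the automorphism group of G acts transitively on the edge set of G but does not act transitively on the vertex set of G, then G is bipartite (i.e., G admits a proper 2-coloring). -/
/-! Fix an edge `ab`. Since `G` is connected and has more than one vertex, every vertex lies on
an edge, and an automorphism moves that edge onto `ab`; so every vertex lies in the orbit of
`a` or of `b`, and the two ends of every edge lie one in each. Vertex-intransitivity forces
these two orbits to be distinct, hence disjoint, and they give the two colour classes. -/

open MulAction

theorem MulAction.isPretransitive_of_forall_mem_orbit_or {M α : Type*} [Group M] [MulAction M α]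
    {a b : α} (hab : b ∈ orbit M a) (h : ∀ v, v ∈ orbit M a ∨ v ∈ orbit M b) :
    IsPretransitive M α := by
  rw [isPretransitive_iff_orbit_eq_univ a, Set.eq_univ_iff_forall]
  intro v
  rcases h v with hv | hv
  · exact hv
  · rwa [orbit_eq_iff.mpr hab] at hv

namespace SimpleGraph

variable {V : Type*} (G : SimpleGraph V)

def IsEdgeTransitive : Prop :=
  ∀ e ∈ G.edgeSet, ∀ f ∈ G.edgeSet, ∃ φ : G ≃g G, Sym2.map (⇑φ) e = f

variable {G}

namespace IsEdgeTransitive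

theorem mem_orbit_of_adj (hG : G.IsEdgeTransitive) {a b u v : V} (hab : G.Adj a b)
    (huv : G.Adj u v) :
    (u ∈ orbit (G ≃g G) a ∧ v ∈ orbit (G ≃g G) b) ∨
      (u ∈ orbit (G ≃g G) b ∧ v ∈ orbit (G ≃g G) a) := by
  obtain ⟨φ, hφ⟩ := hG s(u, v) huv s(a, b) hab
  rw [Sym2.map_mk, Sym2.eq_iff] at hφ
  have hu : ∀ {c}, φ u = c → u ∈ orbit (G ≃g G) c := fun h ↦
    mem_orbit_symm.mp (h ▸ mem_orbit u φ)
  have hv : ∀ {c}, φ v = c → v ∈ orbit (G ≃g G) c := fun h ↦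
    mem_orbit_symm.mp (h ▸ mem_orbit v φ)
  rcases hφ with ⟨hua, hvb⟩ | ⟨hub, hva⟩
  · exact .inl ⟨hu hua, hv hvb⟩
  · exact .inr ⟨hu hub, hv hva⟩

theorem mem_orbit_or_mem_orbit (hG : G.IsEdgeTransitive) {a b v : V} (hab : G.Adj a b)
    (hv : ¬ G.IsIsolated v) : v ∈ orbit (G ≃g G) a ∨ v ∈ orbit (G ≃g G) b := by
  obtain ⟨w, hvw⟩ := exists_adj_iff_not_isIsolated.mpr hv
  exact (hG.mem_orbit_of_adj hab hvw).imp And.left And.left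

theorem colorable_two (hG : G.IsEdgeTransitive) {a b : V} (hab : G.Adj a b)
    (hb : b ∉ orbit (G ≃g G) a) : G.Colorable 2 := by
  classical
  have disjoint : ∀ {v}, v ∈ orbit (G ≃g G) b → v ∉ orbit (G ≃g G) a := fun hvb hva ↦
    hb (orbit_eq_iff.mp ((orbit_eq_iff.mpr hvb).symm.trans (orbit_eq_iff.mpr hva)))
  refine (Coloring.mk (fun v ↦ decide (v ∈ orbit (G ≃g G) a)) fun {u v} huv ↦ ?_).colorable
  rcases hG.mem_orbit_of_adj hab huv with ⟨hua, hvb⟩ | ⟨hub, hva⟩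
  · simp [hua, disjoint hvb]
  · simp [hva, disjoint hub]

end IsEdgeTransitive

end SimpleGraph

theorem edge_transitive_not_vertex_transitive_bipartite_general
    {V : Type*} (G : SimpleGraph V) (hconn : G.Connected)
    (hET : ∀ e ∈ G.edgeSet, ∀ f ∈ G.edgeSet, ∃ φ : G ≃g G, Sym2.map (⇑φ) e = f)
    (hVT : ¬ ∀ u v : V, ∃ φ : G ≃g G, φ u = v) :
    G.Colorable 2 := by
  have hG : G.IsEdgeTransitive := hET
  have : Nontrivial V := by
    by_contra! hV
    exact hVT fun u v ↦ ⟨1, Subsingleton.elim _ _⟩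
  obtain ⟨a, b, hab⟩ : ∃ a b, G.Adj a b :=
    let ⟨a⟩ := hconn.nonempty
    ⟨a, G.exists_adj_iff_not_isIsolated.mpr (hconn.preconnected.not_isIsolated a)⟩
  have hb : b ∉ orbit (G ≃g G) a := fun hb ↦ hVT <|
    (isPretransitive_of_forall_mem_orbit_or hb fun v ↦
      hG.mem_orbit_or_mem_orbit hab (hconn.preconnected.not_isIsolated v)).exists_smul_eq
  exact hG.colorable_two hab hb

/-- **Proposition 1.5 (Dauber–Harary).** A connected simple graph on a finite vertex set
whose automorphism group is edge-transitive but not vertex-transitive is bipartite,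
i.e. admits a proper 2-coloring. -/
theorem edge_transitive_not_vertex_transitive_bipartite
    {V : Type*} [Fintype V] (G : SimpleGraph V) (hconn : G.Connected)
    (hET : ∀ e ∈ G.edgeSet, ∀ f ∈ G.edgeSet, ∃ φ : G ≃g G, Sym2.map (⇑φ) e = f)
    (hVT : ¬ ∀ u v : V, ∃ φ : G ≃g G, φ u = v) :
    G.Colorable 2 :=
  edge_transitive_not_vertex_transitive_bipartite_general G hconn hET hVT
end

section
/- Let a group Γ act transitively on a finite set X, and consider the diagonal action of Γ on X × X. Let s and t be orbits of Γ on X × X. If the pairs (x, y) and (x', y') lie in the same Γ-orbit of X × X, then the cardinalities |{ z ∈ X : (x, z) ∈ s and (z, y) ∈ t }| and |{ z ∈ X : (x', z) ∈ s and (z, y') ∈ t }| are equal. -/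
/-! A group element `g` carrying `(x, y)` to `(x', y')` preserves the orbits `s` and `t`, so
`z ↦ g • z` maps `{z | (x, z) ∈ s ∧ (z, y) ∈ t}` bijectively onto the corresponding set for `(x', y')`. -/

open MulAction Pointwise

section

variable {G α : Type*} [Group G] [MulAction G α]

lemma MulAction.IsFixedBlock.smul_mem_iff {B : Set α} (hB : IsFixedBlock G B) (g : G) (a : α) :
    g • a ∈ B ↔ a ∈ B := by
  conv_lhs => rw [← hB g]
  exact Set.smul_mem_smul_set_iff

lemma smul_setOf_mem_relComp {s t : Set (α × α)} (hs : IsFixedBlock G s) (ht : IsFixedBlock G t)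
    (g : G) (x y : α) :
    g • {z | (x, z) ∈ s ∧ (z, y) ∈ t} = {z | (g • x, z) ∈ s ∧ (z, g • y) ∈ t} := by
  ext z
  rw [Set.mem_smul_set_iff_inv_smul_mem, Set.mem_ofPred_eq, Set.mem_ofPred_eq,
    ← hs.smul_mem_iff g, ← ht.smul_mem_iff g, Prod.smul_mk, Prod.smul_mk, smul_inv_smul]

end

theorem schurian_intersection_number_constant_general
    {Γ X : Type*} [Group Γ] [MulAction Γ X]
    (s t : Set (X × X))
    (hs : ∃ p : X × X, s = MulAction.orbit Γ p)
    (ht : ∃ p : X × X, t = MulAction.orbit Γ p)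
    (x y x' y' : X) (horb : (x', y') ∈ MulAction.orbit Γ (x, y)) :
    {z : X | (x, z) ∈ s ∧ (z, y) ∈ t}.ncard = {z : X | (x', z) ∈ s ∧ (z, y') ∈ t}.ncard := by
  obtain ⟨p, rfl⟩ := hs
  obtain ⟨q, rfl⟩ := ht
  obtain ⟨g, hg⟩ := horb
  obtain ⟨rfl, rfl⟩ : g • x = x' ∧ g • y = y' := Prod.ext_iff.mp hg
  rw [← smul_setOf_mem_relComp (IsFixedBlock.orbit p) (IsFixedBlock.orbit q), Set.ncard_smul_set]

/-- **Intersection numbers of Schurian schemes.** Let a group `Γ` act transitively on a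
finite set `X`, and let `s`, `t` be orbits of the diagonal action of `Γ` on `X × X`.
If `(x, y)` and `(x', y')` lie in the same `Γ`-orbit of `X × X`, then the numbers of
`z ∈ X` with `(x, z) ∈ s` and `(z, y) ∈ t`, resp. `(x', z) ∈ s` and `(z, y') ∈ t`,
coincide. -/
theorem schurian_intersection_number_constant
    {Γ X : Type*} [Group Γ] [MulAction Γ X] [Fintype X]
    [MulAction.IsPretransitive Γ X]
    (s t : Set (X × X))
    (hs : ∃ p : X × X, s = MulAction.orbit Γ p)
    (ht : ∃ p : X × X, t = MulAction.orbit Γ p)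
    (x y x' y' : X) (horb : (x', y') ∈ MulAction.orbit Γ (x, y)) :
    {z : X | (x, z) ∈ s ∧ (z, y) ∈ t}.ncard = {z : X | (x', z) ∈ s ∧ (z, y') ∈ t}.ncard :=
  schurian_intersection_number_constant_general s t hs ht x y x' y' horb
end

section
/- Let d ≥ 2 be an integer. In EuclideanSpace ℝ (Fin (d+1)), let v_k = e_k − (1/(d+1)) ∑_i e_i, let u_k = v_k/‖v_k‖, and let H = { x : ∑_i x_i = 0 }. Then the antipodal 2(d+1)-point set X = {u_k} ∪ {−u_k} on the unit sphere of H satisfies the moment conditions of a spherical 3-design in the d-dimensional space H: ∑_{x ∈ X} x = 0; for every w ∈ H, ∑_{x ∈ X} ⟨x, w⟩² = (2(d+1)/d)‖w‖²; and for all w₁, w₂, w₃ ∈ H, ∑_{x ∈ X} ⟨x, w₁⟩⟨x, w₂⟩⟨x, w₃⟩ = 0. -/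
/-!
The points `u_k` are the vertices of a regular simplex in `H`: `⟪v_k, w⟫ = w_k` for `w ∈ H`, so
`‖v_k‖² = d / (d + 1)` and `⟪u_k, u_j⟫ = -1 / d` for `k ≠ j`. For `d ≥ 2` this Gram matrix makes
the `2(d+1)` points `±u_k` distinct, the odd moments cancel in the pairs `±u_k`, and the second
moment is `2 ∑_k ⟪u_k, w⟫² = 2 (d + 1) / d ∑_k w_k²`.
-/

open scoped RealInnerProductSpace

noncomputable section

section Antipodal

variable {ι E M : Type*} [Fintype ι] [InvolutiveNeg E]

theorem finsum_mem_range_union_range_neg [AddCommMonoid M] {u : ι → E}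
    (hinj : Function.Injective u) (hne : ∀ k j, u k ≠ -u j) (f : E → M) :
    ∑ᶠ x ∈ Set.range u ∪ Set.range (fun k => -u k), f x = ∑ k, (f (u k) + f (-u k)) := by
  have hdisj : Disjoint (Set.range u) (Set.range fun k => -u k) :=
    Set.disjoint_left.2 fun _ ⟨k, hk⟩ ⟨j, hj⟩ => hne k j (hk.trans hj.symm)
  rw [finsum_mem_union hdisj (Set.finite_range _) (Set.finite_range _),
    finsum_mem_range hinj, finsum_mem_range (g := fun k => -u k) (neg_injective.comp hinj),
    finsum_eq_sum_of_fintype, finsum_eq_sum_of_fintype, Finset.sum_add_distrib]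

theorem finsum_mem_range_union_range_neg_of_odd [AddCommGroup M] {u : ι → E}
    (hinj : Function.Injective u) (hne : ∀ k j, u k ≠ -u j) {f : E → M}
    (hf : ∀ x, f (-x) = -f x) :
    ∑ᶠ x ∈ Set.range u ∪ Set.range (fun k => -u k), f x = 0 := by
  rw [finsum_mem_range_union_range_neg hinj hne]
  simp [hf]

end Antipodal

theorem one_sub_inv_card_pos {ι : Type*} [Fintype ι] (hcard : 2 ≤ Fintype.card ι) :
    0 < 1 - (Fintype.card ι : ℝ)⁻¹ := by
  have hn : (2 : ℝ) ≤ Fintype.card ι := by exact_mod_cast hcard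
  rw [sub_pos]
  exact inv_lt_one_of_one_lt₀ (by linarith)

section Simplex

variable {ι : Type*} [Fintype ι] [DecidableEq ι]

def centeredSingle (k : ι) : EuclideanSpace ℝ ι :=
  EuclideanSpace.single k 1 - (Fintype.card ι : ℝ)⁻¹ • ∑ i, EuclideanSpace.single i 1

theorem inner_centeredSingle (k : ι) (w : EuclideanSpace ℝ ι) :
    ⟪centeredSingle k, w⟫ = w k - (Fintype.card ι : ℝ)⁻¹ * ∑ i, w i := by
  simp [centeredSingle, inner_sub_left, inner_smul_left, sum_inner,
    EuclideanSpace.inner_single_left]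

theorem inner_centeredSingle_of_sum_eq_zero (k : ι) {w : EuclideanSpace ℝ ι}
    (hw : ∑ i, w i = 0) : ⟪centeredSingle k, w⟫ = w k := by
  rw [inner_centeredSingle, hw, mul_zero, sub_zero]

theorem centeredSingle_apply (k i : ι) :
    centeredSingle k i = (if i = k then 1 else 0) - (Fintype.card ι : ℝ)⁻¹ := by
  simpa [EuclideanSpace.inner_single_right, PiLp.single_apply, eq_comm]
    using inner_centeredSingle k (EuclideanSpace.single i 1)

theorem sum_centeredSingle_apply (k : ι) : ∑ i, centeredSingle k i = 0 := by
  have : Nonempty ι := ⟨k⟩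
  have : (Fintype.card ι : ℝ) ≠ 0 := Nat.cast_ne_zero.2 Fintype.card_ne_zero
  simp [centeredSingle_apply, Finset.sum_sub_distrib, this]

theorem inner_centeredSingle_centeredSingle (k j : ι) :
    ⟪centeredSingle k, centeredSingle j⟫ = (if k = j then 1 else 0) - (Fintype.card ι : ℝ)⁻¹ := by
  rw [inner_centeredSingle_of_sum_eq_zero k (sum_centeredSingle_apply j), centeredSingle_apply]

theorem norm_centeredSingle (k : ι) :
    ‖centeredSingle k‖ = √(1 - (Fintype.card ι : ℝ)⁻¹) := by
  rw [← Real.sqrt_sq (norm_nonneg _), ← real_inner_self_eq_norm_sq,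
    inner_centeredSingle_centeredSingle, if_pos rfl]

def simplexVertex (k : ι) : EuclideanSpace ℝ ι :=
  ‖centeredSingle k‖⁻¹ • centeredSingle k

theorem inner_simplexVertex_of_sum_eq_zero (k : ι) {w : EuclideanSpace ℝ ι}
    (hw : ∑ i, w i = 0) : ⟪simplexVertex k, w⟫ = ‖centeredSingle k‖⁻¹ * w k := by
  rw [simplexVertex, real_inner_smul_left, inner_centeredSingle_of_sum_eq_zero k hw]

theorem inner_simplexVertex_simplexVertex (hcard : 2 ≤ Fintype.card ι) (k j : ι) :
    ⟪simplexVertex k, simplexVertex j⟫ = if k = j then 1 else -((Fintype.card ι : ℝ) - 1)⁻¹ := by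
  have hpos := one_sub_inv_card_pos hcard
  rw [simplexVertex, simplexVertex, real_inner_smul_left, real_inner_smul_right,
    inner_centeredSingle_centeredSingle, norm_centeredSingle, norm_centeredSingle,
    ← mul_assoc, ← mul_inv, Real.mul_self_sqrt hpos.le]
  split_ifs
  · exact inv_mul_cancel₀ hpos.ne'
  · field_simp
    ring

theorem simplexVertex_injective (hcard : 2 ≤ Fintype.card ι) :
    Function.Injective (simplexVertex (ι := ι)) := by
  intro k j hkj
  by_contra hne
  have hn : (2 : ℝ) ≤ Fintype.card ι := by exact_mod_cast hcard
  have hkj' := inner_simplexVertex_simplexVertex hcard k j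
  rw [← hkj, inner_simplexVertex_simplexVertex hcard, if_pos rfl, if_neg hne] at hkj'
  have : 0 < ((Fintype.card ι : ℝ) - 1)⁻¹ := inv_pos.2 (by linarith)
  linarith

theorem simplexVertex_ne_neg (hcard : 3 ≤ Fintype.card ι) (k j : ι) :
    simplexVertex k ≠ -simplexVertex j := by
  intro hkj
  have hn : (3 : ℝ) ≤ Fintype.card ι := by exact_mod_cast hcard
  have hkj' := inner_simplexVertex_simplexVertex (by omega) k j
  rw [hkj, inner_neg_left, inner_simplexVertex_simplexVertex (by omega), if_pos rfl] at hkj'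
  split_ifs at hkj'
  · norm_num at hkj'
  · have : ((Fintype.card ι : ℝ) - 1)⁻¹ < 1 := inv_lt_one_of_one_lt₀ (by linarith)
    linarith

theorem sum_inner_simplexVertex_sq (hcard : 2 ≤ Fintype.card ι) {w : EuclideanSpace ℝ ι}
    (hw : ∑ i, w i = 0) :
    ∑ k, ⟪simplexVertex k, w⟫ ^ 2 =
      Fintype.card ι / (Fintype.card ι - 1 : ℝ) * ‖w‖ ^ 2 := by
  have hpos := one_sub_inv_card_pos hcard
  simp_rw [inner_simplexVertex_of_sum_eq_zero _ hw, norm_centeredSingle, mul_pow, inv_pow,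
    Real.sq_sqrt hpos.le, ← Finset.mul_sum, EuclideanSpace.norm_sq_eq, Real.norm_eq_abs,
    sq_abs]
  congr 1
  field_simp

end Simplex

/-- **Section 5.2: the diamond lattice is a spherical 3-design.** The antipodal
`2(d+1)`-point set `X = {±u_k}` on the unit sphere of the hyperplane
`H = {x : ∑ i, x i = 0}` satisfies the first-, second- and third-moment conditions of a
spherical 3-design in the `d`-dimensional space `H`. -/
theorem diamond_lattice_design_moments
    (d : ℕ) (hd : 2 ≤ d)
    (v : Fin (d + 1) → EuclideanSpace ℝ (Fin (d + 1)))
    (hv : ∀ k, v k = EuclideanSpace.single k 1 -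
      ((d + 1 : ℝ))⁻¹ • ∑ i : Fin (d + 1), EuclideanSpace.single i (1 : ℝ))
    (u : Fin (d + 1) → EuclideanSpace ℝ (Fin (d + 1)))
    (hu : ∀ k, u k = ‖v k‖⁻¹ • v k)
    (X : Set (EuclideanSpace ℝ (Fin (d + 1))))
    (hX : X = Set.range u ∪ Set.range (fun k => -u k)) :
    (∑ᶠ x ∈ X, x = 0) ∧
    (∀ w : EuclideanSpace ℝ (Fin (d + 1)), ∑ i, w i = 0 →
      ∑ᶠ x ∈ X, ⟪x, w⟫ ^ 2 = (2 * (d + 1) / d : ℝ) * ‖w‖ ^ 2) ∧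
    (∀ w₁ w₂ w₃ : EuclideanSpace ℝ (Fin (d + 1)),
      (∑ i, w₁ i = 0) → (∑ i, w₂ i = 0) → (∑ i, w₃ i = 0) →
      ∑ᶠ x ∈ X, ⟪x, w₁⟫ * ⟪x, w₂⟫ * ⟪x, w₃⟫ = 0) := by
  have hcard : 3 ≤ Fintype.card (Fin (d + 1)) := by simpa using hd
  obtain rfl : v = centeredSingle := funext fun k => by simp [hv, centeredSingle]
  obtain rfl : u = simplexVertex := funext hu
  subst hX
  have hinj := simplexVertex_injective (ι := Fin (d + 1)) (by omega)
  have hne := simplexVertex_ne_neg hcard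
  refine ⟨finsum_mem_range_union_range_neg_of_odd hinj hne fun _ => rfl, fun w hw => ?_,
    fun w₁ w₂ w₃ _ _ _ => finsum_mem_range_union_range_neg_of_odd hinj hne fun x => ?_⟩
  · simp_rw [finsum_mem_range_union_range_neg hinj hne, inner_neg_left, neg_sq, ← two_mul,
      ← Finset.mul_sum, sum_inner_simplexVertex_sq (by omega) hw, Fintype.card_fin, Nat.cast_add,
      Nat.cast_one, add_sub_cancel_right]
    ring
  · simp only [inner_neg_left]
    ring

end
end
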